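/- Let α ∈ (0, 1/2), a = 1 − 2α and b = 1/α − 2 (so a, b > 0). Define the modified ELU function R : ℝ → ℝ by R(z) = (z²/2 + a·z)/(z + b) for z > 0 and R(z) = α·(exp(z) − 1) for z ≤ 0. Then R is twice continuously differentiable on ℝ, and R'(0) = R''(0) = α. -/

import Mathlib

/-!
On `z ≤ 0` the function is `α (eᶻ - 1)`, whose value and first two derivatives at `0` are
`0, α, α`. On `z ≥ 0` it is a rational function, smooth since `z + b > 0`, whose value and
first two derivatives at `0` are `0, a / b, (b - 2a) / b²`; the choice of `a` and `b` makes
both of the latter equal to `α`. Two branches that agree at the junction together with their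
derivatives glue to a differentiable function, so `R` and `R'` are differentiable everywhere,
and `R''` is continuous because its branches agree at `0`.
-/

open Set Filter

section Gluing

variable {p q p' q' : ℝ → ℝ} {c : ℝ}

theorem continuous_ite_lt (hp : ContinuousOn p (Iic c)) (hq : ContinuousOn q (Ici c))
    (hpq : p c = q c) : Continuous fun x => if c < x then q x else p x := by
  simp only [← not_le, ite_not]
  exact continuous_if_le continuous_id continuous_const hp hq fun x hx => hx ▸ hpq

theorem hasDerivAt_ite_lt (hp : ∀ x ≤ c, HasDerivAt p (p' x) x)
    (hq : ∀ x, c ≤ x → HasDerivAt q (q' x) x) (hpq : p c = q c) (hpq' : p' c = q' c)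
    (x : ℝ) :
    HasDerivAt (fun x => if c < x then q x else p x) (if c < x then q' x else p' x) x := by
  have hIic : EqOn (fun x => if c < x then q x else p x) p (Iic c) := fun y hy =>
    if_neg (not_lt.2 hy)
  have hIci : EqOn (fun x => if c < x then q x else p x) q (Ici c) := by
    intro y hy
    rcases (mem_Ici.1 hy).eq_or_lt with rfl | hlt
    · exact (if_neg (lt_irrefl _)).trans hpq
    · exact if_pos hlt
  rcases lt_trichotomy x c with hlt | rfl | hgt
  · rw [if_neg (not_lt.2 hlt.le)]
    exact (hp x hlt.le).congr_of_eventuallyEq <|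
      (eventually_lt_nhds hlt).mono fun y hy => hIic (mem_Iic.2 hy.le)
  · rw [if_neg (lt_irrefl x)]
    have hleft := (hp x le_rfl).hasDerivWithinAt.congr hIic (hIic self_mem_Iic)
    have hright := (hq x le_rfl).hasDerivWithinAt.congr hIci (hIci self_mem_Ici)
    rw [← hpq'] at hright
    simpa only [Iic_union_Ici, hasDerivWithinAt_univ] using hleft.union hright
  · rw [if_pos hgt]
    exact (hq x hgt.le).congr_of_eventuallyEq <|
      (eventually_gt_nhds hgt).mono fun y hy => hIci (mem_Ici.2 hy.le)

end Gluing

theorem contDiff_two_of_hasDerivAt {f f' f'' : ℝ → ℝ} (hf : ∀ x, HasDerivAt f (f' x) x)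
    (hf' : ∀ x, HasDerivAt f' (f'' x) x) (hf'' : Continuous f'') : ContDiff ℝ 2 f := by
  have hderiv : deriv f = f' := funext fun x => (hf x).deriv
  have hderiv' : deriv f' = f'' := funext fun x => (hf' x).deriv
  rw [show (2 : WithTop ℕ∞) = 1 + 1 from rfl, contDiff_succ_iff_deriv, hderiv,
    contDiff_one_iff_deriv, hderiv']
  exact ⟨fun x => (hf x).differentiableAt, by simp, fun x => (hf' x).differentiableAt, hf''⟩

namespace MELU

variable {a b z : ℝ}

noncomputable section

def posBranch (a b z : ℝ) : ℝ := (z ^ 2 / 2 + a * z) / (z + b)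

def posBranchDeriv (a b z : ℝ) : ℝ := (z ^ 2 / 2 + b * z + a * b) / (z + b) ^ 2

def posBranchDeriv2 (a b z : ℝ) : ℝ := b * (b - 2 * a) / (z + b) ^ 3

end

theorem hasDerivAt_posBranch (hz : z + b ≠ 0) :
    HasDerivAt (posBranch a b) (posBranchDeriv a b z) z := by
  have hnum : HasDerivAt (fun z : ℝ => z ^ 2 / 2 + a * z) (z + a) z :=
    (((hasDerivAt_pow 2 z).div_const 2).fun_add ((hasDerivAt_id' z).const_mul a)).congr_deriv
      (by ring)
  refine (hnum.fun_div ((hasDerivAt_id' z).add_const b) hz).congr_deriv ?_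
  rw [posBranchDeriv]
  ring

theorem hasDerivAt_posBranchDeriv (hz : z + b ≠ 0) :
    HasDerivAt (posBranchDeriv a b) (posBranchDeriv2 a b z) z := by
  have hnum : HasDerivAt (fun z : ℝ => z ^ 2 / 2 + b * z + a * b) (z + b) z :=
    ((((hasDerivAt_pow 2 z).div_const 2).fun_add ((hasDerivAt_id' z).const_mul b)).add_const
      (a * b)).congr_deriv (by ring)
  have hden : HasDerivAt (fun z : ℝ => (z + b) ^ 2) (2 * (z + b)) z :=
    (((hasDerivAt_id' z).add_const b).fun_pow 2).congr_deriv (by ring)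
  refine (hnum.fun_div hden (pow_ne_zero 2 hz)).congr_deriv ?_
  rw [posBranchDeriv2]
  field_simp
  ring

theorem continuousAt_posBranchDeriv2 (hz : z + b ≠ 0) : ContinuousAt (posBranchDeriv2 a b) z :=
  continuousAt_const.div ((continuousAt_id.add continuousAt_const).pow 3) (pow_ne_zero 3 hz)

@[simp]
theorem posBranch_zero : posBranch a b 0 = 0 := by simp [posBranch]

theorem posBranchDeriv_zero : posBranchDeriv a b 0 = a / b := by
  rcases eq_or_ne b 0 with rfl | hb
  · simp [posBranchDeriv]
  · norm_num [posBranchDeriv]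
    field_simp

theorem posBranchDeriv2_zero : posBranchDeriv2 a b 0 = (b - 2 * a) / b ^ 2 := by
  rcases eq_or_ne b 0 with rfl | hb
  · simp [posBranchDeriv2]
  · rw [posBranchDeriv2, zero_add]
    field_simp

end MELU

open MELU Real in
theorem melu_C2 (α a b : ℝ) (hα : 0 < α) (hα' : α < 1/2)
    (ha : a = 1 - 2*α) (hb : b = 1/α - 2)
    (R : ℝ → ℝ)
    (hR : ∀ z : ℝ, R z = if 0 < z then (z^2/2 + a*z)/(z + b)
                         else α * (Real.exp z - 1)) :
    ContDiff ℝ 2 R ∧ deriv R 0 = α ∧ deriv (deriv R) 0 = α := by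
  have hb0 : 0 < b := by
    rw [hb, sub_pos, lt_div_iff₀ hα]
    linarith
  have hab : a / b = α := by
    rw [div_eq_iff hb0.ne', ha, hb]
    field_simp
  have hab2 : (b - 2 * a) / b ^ 2 = α := by
    rw [div_eq_iff (pow_ne_zero 2 hb0.ne'), ha, hb]
    field_simp
  have hpos : ∀ z : ℝ, 0 ≤ z → z + b ≠ 0 := fun z hz => by positivity
  have hexp : ∀ z, HasDerivAt (fun z => α * exp z) (α * exp z) z := fun z =>
    (hasDerivAt_exp z).const_mul α
  have hR' : ∀ z, HasDerivAt R (if 0 < z then posBranchDeriv a b z else α * exp z) z := by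
    rw [show R = fun z => if 0 < z then posBranch a b z else α * (exp z - 1) from funext hR]
    exact hasDerivAt_ite_lt (fun z _ => ((hasDerivAt_exp z).sub_const 1).const_mul α)
      (fun z hz => hasDerivAt_posBranch (hpos z hz)) (by simp) (by simp [posBranchDeriv_zero, hab])
  have hR'' := hasDerivAt_ite_lt (fun z _ => hexp z)
    (fun z hz => hasDerivAt_posBranchDeriv (a := a) (hpos z hz))
    (by simp [posBranchDeriv_zero, hab])
    (by simp [posBranchDeriv2_zero, hab2])
  have hR''_cont : Continuous fun z => if 0 < z then posBranchDeriv2 a b z else α * exp z :=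
    continuous_ite_lt (continuous_const.mul continuous_exp).continuousOn
    (fun z hz => (continuousAt_posBranchDeriv2 (a := a) (hpos z hz)).continuousWithinAt)
    (by simp [posBranchDeriv2_zero, hab2])
  refine ⟨contDiff_two_of_hasDerivAt hR' hR'' hR''_cont, (hR' 0).deriv.trans (by simp), ?_⟩
  rw [funext fun z => (hR' z).deriv, (hR'' 0).deriv]
  simp
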